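/- For every real number μ with 0 < |μ| < 1, the quantity maxT(μ,β) attains its minimum over β ∈ ℝ, the minimum value is |μ|/(1 + √(1−μ²)), and the minimum is attained if and only if β = βN(μ) = (1−√(1−μ²))/(1+√(1−μ²)). Concretely: (i) maxT(μ,β) ≥ |μ|/(1+√(1−μ²)) for all β ∈ ℝ; (ii) maxT(μ, βN(μ)) = |μ|/(1+√(1−μ²)); (iii) if maxT(μ,β) = |μ|/(1+√(1−μ²)) for some β ∈ ℝ, then β = βN(μ). -/

import Mathlib

/-!
The roots of `λ² − (1+β)μλ + β` have product `β`, so `maxT μ β ^ 2 ≥ |β|`. Put `s = √(1−μ²)` and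
`ρ = ρN μ = |μ|/(1+s)`, so that `βN μ = ρ²` and `ρ|μ| = 1 − s`. If both roots lie in the closed disc of
radius `ρ`, the quadratic is nonnegative at `±ρ`, which gives `ρ² + β ≥ (1+β)|μ|ρ`; by the
identity `(1+β)|μ|ρ − (ρ² + β) = s(ρ² − β)` this forces `β ≥ ρ²`, while `|β| ≤ ρ²`. Hence
`β = βN μ`, where the discriminant vanishes and the double root `(1+βN μ)μ/2` has modulus `ρ`.
-/

/-- The maximum of the moduli of the two complex roots (counted with multiplicity) of
`λ² − (1+β)·μ·λ + β = 0`; the roots are given by the quadratic formula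
`((1+β)μ ± √((1+β)²μ² − 4β))/2` (complex square root via `cpow`). -/
noncomputable def maxT (μ β : ℝ) : ℝ :=
  max (‖(((((1 + β) * μ : ℝ) : ℂ) +
        ((((1 + β) ^ 2 * μ ^ 2 - 4 * β : ℝ) : ℂ)) ^ ((1 : ℂ) / 2)) / 2)‖)
      (‖(((((1 + β) * μ : ℝ) : ℂ) -
        ((((1 + β) ^ 2 * μ ^ 2 - 4 * β : ℝ) : ℂ)) ^ ((1 : ℂ) / 2)) / 2)‖)

/-- The optimal coefficient `βN(μ) = (1 − √(1−μ²))/(1 + √(1−μ²))`. -/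
noncomputable def βN (μ : ℝ) : ℝ :=
  (1 - Real.sqrt (1 - μ ^ 2)) / (1 + Real.sqrt (1 - μ ^ 2))

noncomputable def ρN (μ : ℝ) : ℝ :=
  |μ| / (1 + Real.sqrt (1 - μ ^ 2))

lemma Complex.cpow_one_half_mul_self (z : ℂ) : z ^ ((1 : ℂ) / 2) * z ^ ((1 : ℂ) / 2) = z := by
  rw [← sq, one_div, Complex.cpow_ofNat_inv_pow]

lemma Complex.ofReal_cpow_one_half {x : ℝ} (hx : 0 ≤ x) :
    (x : ℂ) ^ ((1 : ℂ) / 2) = (Real.sqrt x : ℂ) := by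
  rw [Real.sqrt_eq_rpow, Complex.ofReal_cpow hx]
  norm_num

lemma maxT_nonneg (μ β : ℝ) : 0 ≤ maxT μ β :=
  (norm_nonneg _).trans (le_max_left _ _)

lemma abs_le_maxT_sq (μ β : ℝ) : |β| ≤ maxT μ β ^ 2 := by
  set w : ℂ := (((1 + β) ^ 2 * μ ^ 2 - 4 * β : ℝ) : ℂ) ^ ((1 : ℂ) / 2)
  have hw : w * w = (((1 + β) ^ 2 * μ ^ 2 - 4 * β : ℝ) : ℂ) :=
    Complex.cpow_one_half_mul_self _
  have hprod : ((((1 + β) * μ : ℝ) : ℂ) + w) / 2 * (((((1 + β) * μ : ℝ) : ℂ) - w) / 2) = β := by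
    push_cast at hw ⊢
    linear_combination (-1 / 4 : ℂ) * hw
  calc |β| = ‖((((1 + β) * μ : ℝ) : ℂ) + w) / 2‖ * ‖((((1 + β) * μ : ℝ) : ℂ) - w) / 2‖ := by
        rw [← norm_mul, hprod, Complex.norm_real, Real.norm_eq_abs]
    _ ≤ maxT μ β * maxT μ β :=
        mul_le_mul (le_max_left _ _) (le_max_right _ _) (norm_nonneg _) (maxT_nonneg μ β)
    _ = maxT μ β ^ 2 := (sq _).symm

lemma maxT_eq_of_discrim_nonneg {μ β : ℝ} (hD : 0 ≤ (1 + β) ^ 2 * μ ^ 2 - 4 * β) :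
    maxT μ β = max |((1 + β) * μ + Real.sqrt ((1 + β) ^ 2 * μ ^ 2 - 4 * β)) / 2|
      |((1 + β) * μ - Real.sqrt ((1 + β) ^ 2 * μ ^ 2 - 4 * β)) / 2| := by
  rw [maxT, Complex.ofReal_cpow_one_half hD, ← Complex.ofReal_add, ← Complex.ofReal_sub,
    ← Complex.ofReal_ofNat, ← Complex.ofReal_div, ← Complex.ofReal_div, Complex.norm_real,
    Complex.norm_real, Real.norm_eq_abs, Real.norm_eq_abs]

lemma quadratic_nonneg_of_maxT_le_abs {μ β x : ℝ} (hx : maxT μ β ≤ |x|) :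
    0 ≤ x ^ 2 - (1 + β) * μ * x + β := by
  rcases lt_or_ge ((1 + β) ^ 2 * μ ^ 2 - 4 * β) 0 with hD | hD
  · nlinarith [sq_nonneg (2 * x - (1 + β) * μ)]
  rw [maxT_eq_of_discrim_nonneg hD, max_le_iff] at hx
  set q := Real.sqrt ((1 + β) ^ 2 * μ ^ 2 - 4 * β)
  have hq : q ^ 2 = (1 + β) ^ 2 * μ ^ 2 - 4 * β := Real.sq_sqrt hD
  -- `|r±| ≤ |x|` puts `x` weakly on the same side of both real roots `r±`
  have hfactor : x ^ 2 - (1 + β) * μ * x + β =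
      (x - ((1 + β) * μ + q) / 2) * (x - ((1 + β) * μ - q) / 2) := by
    linear_combination (1 / 4 : ℝ) * hq
  rw [hfactor]
  rcases le_total 0 x with hx0 | hx0
  · rw [abs_of_nonneg hx0] at hx
    exact mul_nonneg (by linarith [le_abs_self (((1 + β) * μ + q) / 2)])
      (by linarith [le_abs_self (((1 + β) * μ - q) / 2)])
  · rw [abs_of_nonpos hx0] at hx
    exact mul_nonneg_of_nonpos_of_nonpos (by linarith [neg_abs_le (((1 + β) * μ + q) / 2)])
      (by linarith [neg_abs_le (((1 + β) * μ - q) / 2)])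

lemma abs_eq_ρN_mul (μ : ℝ) : |μ| = ρN μ * (1 + Real.sqrt (1 - μ ^ 2)) := by
  rw [ρN, div_mul_cancel₀]
  positivity

section Optimum

variable {μ : ℝ}

lemma abs_mul_ρN (hμ : μ ^ 2 ≤ 1) : |μ| * ρN μ = 1 - Real.sqrt (1 - μ ^ 2) := by
  have hs := Real.sq_sqrt (sub_nonneg.mpr hμ)
  have hpos : 0 < 1 + Real.sqrt (1 - μ ^ 2) := by positivity
  rw [ρN, mul_div_assoc', div_eq_iff hpos.ne', ← sq, sq_abs]
  linear_combination hs

lemma βN_eq_ρN_sq (hμ : μ ^ 2 ≤ 1) : βN μ = ρN μ ^ 2 := by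
  have hs := Real.sq_sqrt (sub_nonneg.mpr hμ)
  have hpos : 0 < 1 + Real.sqrt (1 - μ ^ 2) := by positivity
  rw [βN, ρN, div_pow, sq_abs, div_eq_div_iff hpos.ne' (by positivity)]
  linear_combination (-(1 + Real.sqrt (1 - μ ^ 2))) * hs

lemma maxT_βN (hμ : μ ^ 2 ≤ 1) : maxT μ (βN μ) = ρN μ := by
  have hsum : (1 + βN μ) * |μ| = 2 * ρN μ := by
    rw [βN_eq_ρN_sq hμ]
    linear_combination ρN μ * abs_mul_ρN hμ + abs_eq_ρN_mul μ
  have hD : (1 + βN μ) ^ 2 * μ ^ 2 - 4 * βN μ = 0 := by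
    rw [← sq_abs μ, ← mul_pow, hsum, βN_eq_ρN_sq hμ]
    ring
  rw [maxT_eq_of_discrim_nonneg hD.ge, hD, Real.sqrt_zero, add_zero, sub_zero, max_self,
    abs_div, abs_mul, abs_two, abs_of_nonneg (by rw [βN_eq_ρN_sq hμ]; positivity), hsum]
  ring

lemma eq_βN_of_maxT_le_ρN {β : ℝ} (hμ : μ ^ 2 < 1) (h : maxT μ β ≤ ρN μ) : β = βN μ := by
  set s := Real.sqrt (1 - μ ^ 2)
  have hs : 0 < s := Real.sqrt_pos.mpr (sub_pos.mpr hμ)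
  set ρ := ρN μ
  have hβ_le : β ≤ ρ ^ 2 :=
    (le_abs_self β).trans ((abs_le_maxT_sq μ β).trans (pow_le_pow_left₀ (maxT_nonneg μ β) h 2))
  have hρ_quad : (1 + β) * |μ| * ρ ≤ ρ ^ 2 + β := by
    rcases le_total 0 μ with hμ0 | hμ0
    · have := quadratic_nonneg_of_maxT_le_abs (x := ρ) (h.trans (le_abs_self ρ))
      rw [abs_of_nonneg hμ0]; linarith
    · have := quadratic_nonneg_of_maxT_le_abs (x := -ρ) (h.trans (abs_neg ρ ▸ le_abs_self ρ))
      rw [abs_of_nonpos hμ0]; linarith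
  have hidentity : (1 + β) * |μ| * ρ - (ρ ^ 2 + β) = s * (ρ ^ 2 - β) := by
    linear_combination β * abs_mul_ρN hμ.le + ρ * abs_eq_ρN_mul μ
  have hβ_ge : ρ ^ 2 ≤ β :=
    sub_nonpos.mp (nonpos_of_mul_nonpos_right (by linarith) hs)
  rw [βN_eq_ρN_sq hμ.le]; linarith

end Optimum

theorem stmt13_general (μ : ℝ) (h1 : |μ| < 1) :
    (∀ β : ℝ, |μ| / (1 + Real.sqrt (1 - μ ^ 2)) ≤ maxT μ β) ∧
    maxT μ (βN μ) = |μ| / (1 + Real.sqrt (1 - μ ^ 2)) ∧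
    (∀ β : ℝ, maxT μ β = |μ| / (1 + Real.sqrt (1 - μ ^ 2)) → β = βN μ) := by
  have hμ : μ ^ 2 < 1 := (sq_lt_one_iff_abs_lt_one μ).mpr h1
  refine ⟨fun β => ?_, maxT_βN hμ.le, fun β hβ => eq_βN_of_maxT_le_ρN hμ hβ.le⟩
  by_contra! hlt
  rw [eq_βN_of_maxT_le_ρN hμ hlt.le, maxT_βN hμ.le] at hlt
  exact hlt.false

theorem stmt13 (μ : ℝ) (h0 : 0 < |μ|) (h1 : |μ| < 1) :
    (∀ β : ℝ, |μ| / (1 + Real.sqrt (1 - μ ^ 2)) ≤ maxT μ β) ∧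
    maxT μ (βN μ) = |μ| / (1 + Real.sqrt (1 - μ ^ 2)) ∧
    (∀ β : ℝ, maxT μ β = |μ| / (1 + Real.sqrt (1 - μ ^ 2)) → β = βN μ) :=
  stmt13_general μ h1
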